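/- Let α ∈ (0,1], let μ be a probability distribution on the k-element subsets of [n] with single-element marginals p_i = (1/k)·∑_{S ∋ i} μ(S). Suppose that for all (z₁,…,zₙ) ∈ ℝ^n_{≥0}, g_μ(z₁,…,zₙ) ≤ (∑_{i=1}^n p_i z_i^{1/α})^{αk}. Then μ is (1/α)-entropically independent: for every probability distribution ν on the k-element subsets of [n] with supp(ν) ⊆ supp(μ), D(ν D_{k→1} ‖ μ D_{k→1}) ≤ (1/(αk))·D(ν ‖ μ). -/

import Mathlib

open Finset

/-- The generating polynomial `g_μ(z) = ∑_S μ(S) ∏_{i∈S} z_i`. -/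
noncomputable def genPoly {n : ℕ} (μ : Finset (Fin n) → ℝ) (z : Fin n → ℝ) : ℝ :=
  ∑ S : Finset (Fin n), μ S * ∏ i ∈ S, z i

/-- The `k → 1` down operator: `(ν D_{k→1})(i) = (1/k) ∑_{S ∋ i} ν(S)`. -/
noncomputable def down1 {n : ℕ} (k : ℕ) (ν : Finset (Fin n) → ℝ) (i : Fin n) : ℝ :=
  (1 / (k : ℝ)) * ∑ S ∈ Finset.univ.filter (fun S => i ∈ S), ν S

/-- KL divergence `D(ν ‖ μ) = ∑_x ν(x) log (ν(x)/μ(x))` on a finite type. -/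
noncomputable def KLdiv {X : Type*} [Fintype X] (ν μ : X → ℝ) : ℝ :=
  ∑ x : X, ν x * Real.log (ν x / μ x)

/-!
Write `p = μ D_{k→1}`, `q = ν D_{k→1}` and tilt by `z_i = (q_i / p_i) ^ α`. Then
`∑ p_i z_i ^ (1/α) = ∑ q_i = 1`, so the hypothesis gives `g_μ(z) ≤ 1`: the tilted weights
`μ(S) ∏_{i∈S} z_i` have total mass at most one. Gibbs' inequality for `ν` against them reads
`D(ν ‖ μ) ≥ ∑_S ν(S) ∑_{i∈S} log z_i = k ∑_i q_i log z_i = α k D(q ‖ p)`.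
-/

open Real

lemma sub_le_mul_log_div {a b : ℝ} (ha : 0 ≤ a) (hb : 0 ≤ b) (hab : a ≠ 0 → b ≠ 0) :
    a - b ≤ a * log (a / b) := by
  rcases ha.eq_or_lt with rfl | ha
  · simpa using hb
  have hb : 0 < b := hb.lt_of_ne (hab ha.ne').symm
  have := one_sub_inv_le_log_of_pos (div_pos ha hb)
  rw [inv_div] at this
  calc a - b = a * (1 - b / a) := by field_simp
    _ ≤ a * log (a / b) := by gcongr

section KL

variable {X : Type*} [Fintype X]

lemma KLdiv_nonneg_of_sum_le {ν w : X → ℝ} (hν0 : ∀ x, 0 ≤ ν x) (hν1 : ∑ x, ν x = 1)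
    (hw0 : ∀ x, 0 ≤ w x) (hw1 : ∑ x, w x ≤ 1) (hsupp : ∀ x, ν x ≠ 0 → w x ≠ 0) :
    0 ≤ KLdiv ν w :=
  calc (0 : ℝ) ≤ ∑ x, (ν x - w x) := by rw [sum_sub_distrib, hν1]; linarith
    _ ≤ KLdiv ν w := sum_le_sum fun x _ => sub_le_mul_log_div (hν0 x) (hw0 x) (hsupp x)

lemma KLdiv_mul_right {ν μ t : X → ℝ} (hsupp : ∀ x, ν x ≠ 0 → μ x ≠ 0 ∧ t x ≠ 0) :
    KLdiv ν (fun x => μ x * t x) = KLdiv ν μ - ∑ x, ν x * log (t x) := by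
  rw [KLdiv, KLdiv, ← sum_sub_distrib]
  refine sum_congr rfl fun x _ => ?_
  by_cases hνx : ν x = 0
  · simp [hνx]
  obtain ⟨hμx, htx⟩ := hsupp x hνx
  rw [← mul_sub, ← div_div, log_div (div_ne_zero hνx hμx) htx]

end KL

section Tilt

variable {ι : Type*} [Fintype ι] {p q : ι → ℝ} {α : ℝ}

lemma log_rpow_of_nonneg {x : ℝ} (hx : 0 ≤ x) (hα : α ≠ 0) : log (x ^ α) = α * log x := by
  rcases hx.eq_or_lt with rfl | hx
  · simp [zero_rpow hα]
  · exact log_rpow hx α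

lemma sum_mul_tilt_rpow_inv (hp0 : ∀ i, 0 ≤ p i) (hq0 : ∀ i, 0 ≤ q i)
    (hsupp : ∀ i, q i ≠ 0 → p i ≠ 0) (hα : α ≠ 0) :
    ∑ i, p i * ((q i / p i) ^ α) ^ (1 / α) = ∑ i, q i := by
  refine sum_congr rfl fun i _ => ?_
  rw [one_div, rpow_rpow_inv (div_nonneg (hq0 i) (hp0 i)) hα]
  by_cases hpi : p i = 0
  · simp [hpi, not_imp_not.mp (hsupp i) hpi]
  · exact mul_div_cancel₀ _ hpi

lemma sum_mul_log_tilt (hp0 : ∀ i, 0 ≤ p i) (hq0 : ∀ i, 0 ≤ q i) (hα : α ≠ 0) :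
    ∑ i, q i * log ((q i / p i) ^ α) = α * KLdiv q p := by
  rw [KLdiv, mul_sum]
  refine sum_congr rfl fun i _ => ?_
  rw [log_rpow_of_nonneg (div_nonneg (hq0 i) (hp0 i)) hα]
  ring

end Tilt

lemma sum_sum_filter_mem_mul {ι : Type*} [Fintype ι] [DecidableEq ι] (f : Finset ι → ℝ)
    (g : ι → ℝ) :
    ∑ i, (∑ S ∈ univ.filter (fun S => i ∈ S), f S) * g i = ∑ S, f S * ∑ i ∈ S, g i := by
  simp_rw [sum_filter, sum_mul, ite_mul, zero_mul]
  rw [sum_comm]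
  refine sum_congr rfl fun S _ => ?_
  rw [mul_sum, sum_ite_mem, univ_inter]

section Down

variable {n : ℕ} {k : ℕ} {ν μ : Finset (Fin n) → ℝ}

lemma natCast_mul_sum_down1_mul (hk : k ≠ 0) (g : Fin n → ℝ) :
    (k : ℝ) * ∑ i, down1 k ν i * g i = ∑ S, ν S * ∑ i ∈ S, g i := by
  have hk : (k : ℝ) ≠ 0 := Nat.cast_ne_zero.mpr hk
  rw [← sum_sum_filter_mem_mul, mul_sum]
  refine sum_congr rfl fun i _ => ?_
  rw [down1]
  field_simp

lemma sum_mul_log_prod_eq (hk : k ≠ 0) {z : Fin n → ℝ}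
    (hz : ∀ S, ν S ≠ 0 → ∀ i ∈ S, z i ≠ 0) :
    ∑ S, ν S * log (∏ i ∈ S, z i) = k * ∑ i, down1 k ν i * log (z i) := by
  rw [natCast_mul_sum_down1_mul hk]
  refine sum_congr rfl fun S _ => ?_
  by_cases hνS : ν S = 0
  · simp [hνS]
  · rw [log_prod (hz S hνS)]

lemma sum_down1 (hk : k ≠ 0) (hνk : ∀ S, ν S ≠ 0 → S.card = k) (hν1 : ∑ S, ν S = 1) :
    ∑ i, down1 k ν i = 1 := by
  have hcard : ∑ S, ν S * ∑ i ∈ S, (1 : ℝ) = k := by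
    calc ∑ S, ν S * ∑ i ∈ S, (1 : ℝ) = ∑ S, ν S * k := by
          refine sum_congr rfl fun S _ => ?_
          by_cases hνS : ν S = 0
          · simp [hνS]
          · simp [hνk S hνS]
      _ = k := by rw [← sum_mul, hν1, one_mul]
  have := natCast_mul_sum_down1_mul (ν := ν) hk (fun _ => 1)
  simp only [mul_one] at this
  rw [hcard] at this
  exact (mul_eq_left₀ (Nat.cast_ne_zero.mpr hk)).mp this

lemma down1_nonneg (hν0 : ∀ S, 0 ≤ ν S) (i : Fin n) : 0 ≤ down1 k ν i :=
  mul_nonneg (by positivity) (sum_nonneg fun S _ => hν0 S)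

lemma down1_pos (hk : k ≠ 0) (hν0 : ∀ S, 0 ≤ ν S) {S : Finset (Fin n)} {i : Fin n}
    (hi : i ∈ S) (hνS : ν S ≠ 0) : 0 < down1 k ν i := by
  have hk : (0 : ℝ) < k := by positivity
  refine mul_pos (by positivity) (lt_of_lt_of_le ((hν0 S).lt_of_ne' hνS) ?_)
  exact single_le_sum (fun T _ => hν0 T) (by simpa using hi)

lemma down1_ne_zero_of_support (hk : k ≠ 0) (hμ0 : ∀ S, 0 ≤ μ S)
    (hsupp : ∀ S, μ S = 0 → ν S = 0) {i : Fin n} (hi : down1 k ν i ≠ 0) : down1 k μ i ≠ 0 := by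
  obtain ⟨S, hS, hνS⟩ := exists_ne_zero_of_sum_ne_zero (right_ne_zero_of_mul hi)
  exact (down1_pos hk hμ0 (by simpa using hS) (mt (hsupp S) hνS)).ne'

end Down

theorem stmt_1_general (n k : ℕ) (α : ℝ) (hα0 : 0 < α)
    (μ : Finset (Fin n) → ℝ)
    (hμ0 : ∀ S, 0 ≤ μ S)
    (hdagger : ∀ z : Fin n → ℝ, (∀ i, 0 ≤ z i) →
      genPoly μ z ≤ (∑ i : Fin n, down1 k μ i * z i ^ (1 / α)) ^ (α * (k : ℝ))) :
    ∀ ν : Finset (Fin n) → ℝ,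
      (∀ S, 0 ≤ ν S) → (∀ S, ν S ≠ 0 → S.card = k) →
      (∑ S : Finset (Fin n), ν S = 1) → (∀ S, μ S = 0 → ν S = 0) →
      KLdiv (down1 k ν) (down1 k μ) ≤ (1 / (α * (k : ℝ))) * KLdiv ν μ := by
  intro ν hν0 hνk hν1 hsupp
  rcases eq_or_ne k 0 with rfl | hk
  · simp [down1, KLdiv]
  set p := down1 k μ
  set q := down1 k ν
  have hp0 : ∀ i, 0 ≤ p i := down1_nonneg hμ0
  have hq0 : ∀ i, 0 ≤ q i := down1_nonneg hν0
  have hqp : ∀ i, q i ≠ 0 → p i ≠ 0 := fun i => down1_ne_zero_of_support hk hμ0 hsupp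
  set z : Fin n → ℝ := fun i => (q i / p i) ^ α
  have hz0 : ∀ i, 0 ≤ z i := fun i => rpow_nonneg (div_nonneg (hq0 i) (hp0 i)) α
  have hz_ne : ∀ S, ν S ≠ 0 → ∀ i ∈ S, z i ≠ 0 := fun S hνS i hi => by
    have hqi := down1_pos hk hν0 hi hνS
    exact (rpow_pos_of_pos (div_pos hqi ((hp0 i).lt_of_ne' (hqp i hqi.ne'))) α).ne'
  have hgen : ∑ S, μ S * ∏ i ∈ S, z i ≤ 1 := by
    have h := hdagger z hz0
    simp only [z] at h
    rwa [sum_mul_tilt_rpow_inv hp0 hq0 hqp hα0.ne', sum_down1 hk hνk hν1, one_rpow] at h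
  have hsupp_tilt : ∀ S, ν S ≠ 0 → μ S ≠ 0 ∧ ∏ i ∈ S, z i ≠ 0 := fun S hνS =>
    ⟨mt (hsupp S) hνS, prod_ne_zero_iff.mpr (hz_ne S hνS)⟩
  have hgibbs : 0 ≤ KLdiv ν (fun S => μ S * ∏ i ∈ S, z i) :=
    KLdiv_nonneg_of_sum_le hν0 hν1 (fun S => mul_nonneg (hμ0 S) (prod_nonneg fun i _ => hz0 i))
      hgen fun S hνS => mul_ne_zero_iff.mpr (hsupp_tilt S hνS)
  have htilt : ∑ S, ν S * log (∏ i ∈ S, z i) = α * k * KLdiv q p := by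
    rw [sum_mul_log_prod_eq hk hz_ne, sum_mul_log_tilt hp0 hq0 hα0.ne']
    ring
  rw [KLdiv_mul_right hsupp_tilt, htilt] at hgibbs
  rw [one_div, ← div_eq_inv_mul, le_div_iff₀ (by positivity)]
  linarith

theorem stmt_1 (n k : ℕ) (α : ℝ) (hα0 : 0 < α) (hα1 : α ≤ 1)
    (μ : Finset (Fin n) → ℝ)
    (hμ0 : ∀ S, 0 ≤ μ S)
    (hμk : ∀ S, μ S ≠ 0 → S.card = k)
    (hμ1 : ∑ S : Finset (Fin n), μ S = 1)
    (hdagger : ∀ z : Fin n → ℝ, (∀ i, 0 ≤ z i) →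
      genPoly μ z ≤ (∑ i : Fin n, down1 k μ i * z i ^ (1 / α)) ^ (α * (k : ℝ))) :
    ∀ ν : Finset (Fin n) → ℝ,
      (∀ S, 0 ≤ ν S) → (∀ S, ν S ≠ 0 → S.card = k) →
      (∑ S : Finset (Fin n), ν S = 1) → (∀ S, μ S = 0 → ν S = 0) →
      KLdiv (down1 k ν) (down1 k μ) ≤ (1 / (α * (k : ℝ))) * KLdiv ν μ :=
  stmt_1_general n k α hα0 μ hμ0 hdagger
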